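/- Let Z be a linear order that admits an order embedding into a linear order X of the form ω + Y, and let n ∈ ℕ. If every map g : [ℕ]^{n+1} → ℕ^n × X is good (where ℕ^n × X carries the componentwise order), then ω^Z_n is a well order, i.e., a linear order with no infinite strictly ≺-decreasing sequence. -/

import Mathlib

universe u v

/-! ### First-difference index and the lexicographic relation `≺` -/

/-- `jIdx α β` is the least `j < min (l α) (l β)` with `α_j ≠ β_j`,
or `min (l α) (l β)` if no such index exists. -/
noncomputable def jIdx {X : Type u} (α β : List X) : ℕ := by
  classical
  exact if h : ∃ j, j < min α.length β.length ∧ α[j]? ≠ β[j]? then Nat.find h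
    else min α.length β.length

/-- The relation `≺` on finite sequences over `(X, lt)`. -/
noncomputable def SeqLT {X : Type u} (lt : X → X → Prop) (α β : List X) : Prop :=
  (∃ h : jIdx α β < min α.length β.length,
      lt (α[jIdx α β]'(lt_of_lt_of_le h (min_le_left _ _)))
         (β[jIdx α β]'(lt_of_lt_of_le h (min_le_right _ _)))) ∨
  (jIdx α β = α.length ∧ α.length < β.length)

/-! ### Orders of the form `ω + Y` -/

/-- The least element `0 = (0,0)` of `ℕ ⊕ₗ Y`. -/
def omegaZero (Y : Type u) [LinearOrder Y] : ℕ ⊕ₗ Y := toLex (Sum.inl 0)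

/-- The map `x ↦ 1 + x` on `ℕ ⊕ₗ Y`. -/
def omegaOnePlus (Y : Type u) [LinearOrder Y] : ℕ ⊕ₗ Y → ℕ ⊕ₗ Y := fun x =>
  match ofLex x with
  | Sum.inl n => toLex (Sum.inl (n + 1))
  | Sum.inr y => toLex (Sum.inr y)

/-- The extended sequence `ᾱ : ℕ → T`: `ᾱ_j = 1 + α_j` for `j < l α` and `ᾱ_j = 0` otherwise,
relative to a given least element `zero` and map `onePlus`. -/
def extW {T : Type u} (zero : T) (onePlus : T → T) (α : List T) (j : ℕ) : T :=
  if h : j < α.length then onePlus (α[j]'h) else zero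

/-- `c(α, β) := ᾱ_{j(α,β)}`. -/
noncomputable def cW {T : Type u} (zero : T) (onePlus : T → T) (α β : List T) : T :=
  extW zero onePlus α (jIdx α β)

/-! ### The iterated construction `ω^X_n` -/

/-- A carrier together with relations `<` and `≤` (a raw order package). -/
structure OrdPack : Type (u + 1) where
  T : Type u
  lt : T → T → Prop
  le : T → T → Prop

/-- The package for `ω(X)`: weakly decreasing finite sequences with `≺` and `⪯`. -/
noncomputable def stepPack (P : OrdPack.{u}) : OrdPack.{u} where
  T := {α : List P.T // List.Chain' (fun a b => P.le b a) α}
  lt a b := SeqLT P.lt a.1 b.1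
  le a b := SeqLT P.lt a.1 b.1 ∨ a = b

/-- The package of a linear order. -/
def linPack (Z : Type u) [LinearOrder Z] : OrdPack.{u} := ⟨Z, (· < ·), (· ≤ ·)⟩

/-- The package of `X = ω + Y`. -/
def basePack (Y : Type u) [LinearOrder Y] : OrdPack.{u} := linPack (ℕ ⊕ₗ Y)

/-- `iterPack P n` is (the package of) `ω^X_n` for `X` the order packaged by `P`. -/
noncomputable def iterPack (P : OrdPack.{u}) : ℕ → OrdPack.{u}
  | 0 => P
  | n + 1 => stepPack (iterPack P n)

theorem leReflIter (Y : Type u) [LinearOrder Y] :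
    ∀ (m : ℕ) (x : (iterPack (basePack Y) m).T), (iterPack (basePack Y) m).le x x
  | 0, x => le_refl (α := ℕ ⊕ₗ Y) x
  | _ + 1, _ => Or.inr rfl

theorem chain'_cons_all_eq {T : Type u} {R : T → T → Prop} {z : T} (hz : R z z) :
    ∀ l : List T, (∀ x ∈ l, x = z) → List.Chain' R (z :: l) := by
  intro l
  induction l with
  | nil => intro _; exact List.IsChain.singleton _
  | cons a l ih =>
    intro h
    have ha : a = z := h a List.mem_cons_self
    subst ha
    exact List.IsChain.cons_cons hz (ih fun x hx => h x (List.mem_cons_of_mem _ hx))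

/-- The least element `0` of `ω^X_m` (for `X = ω + Y`). -/
noncomputable def zeroIter (Y : Type u) [LinearOrder Y] :
    (m : ℕ) → (iterPack (basePack Y) m).T
  | 0 => omegaZero Y
  | _ + 1 => ⟨[], List.IsChain.nil⟩

/-- The map `x ↦ 1 + x` on `ω^X_m` (for `X = ω + Y`): at successor levels it maps a
constant-zero sequence to the constant-zero sequence that is longer by one, and is the
identity everywhere else. -/
noncomputable def onePlusIter (Y : Type u) [LinearOrder Y] :
    (m : ℕ) → (iterPack (basePack Y) m).T → (iterPack (basePack Y) m).T
  | 0, x => omegaOnePlus Y x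
  | m + 1, a => by
    classical
    exact if h : ∀ x ∈ a.1, x = zeroIter Y m then
      ⟨zeroIter Y m :: a.1,
        chain'_cons_all_eq (R := fun p q => (iterPack (basePack Y) m).le q p)
          (leReflIter Y m (zeroIter Y m)) a.1 h⟩
    else a

/-- `c(α, β) ∈ ω^X_m` for `α, β ∈ ω^X_{m+1}` (given via their underlying lists). -/
noncomputable def cIter (Y : Type u) [LinearOrder Y] (m : ℕ)
    (α β : List (iterPack (basePack Y) m).T) : (iterPack (basePack Y) m).T :=
  cW (zeroIter Y m) (onePlusIter Y m) α β

/-- Transport along an equality of levels. -/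
noncomputable def castT {Y : Type u} [LinearOrder Y] {a b : ℕ} (h : a = b)
    (x : (iterPack (basePack Y) a).T) : (iterPack (basePack Y) b).T :=
  cast (congrArg (fun m => (iterPack (basePack Y) m).T) h) x

/-! ### Barriers `[ℕ]^n`, the relation `⊲`, and `∪` -/

/-- `s ⊲ t` : `s_0 < t_0` and `s_{i+1} = t_i` for all `i < n`. -/
def Tril {n : ℕ} (s t : Fin (n + 1) → ℕ) : Prop :=
  s 0 < t 0 ∧ ∀ i : Fin n, s i.succ = t i.castSucc

/-- `s ∪ t` for `s ⊲ t` : `(s ∪ t)_i = s_i` for `i ≤ n` and `(s ∪ t)_{n+1} = t_n`. -/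
def unionSeq {n : ℕ} (s t : Fin (n + 1) → ℕ) : Fin (n + 2) → ℕ := fun i =>
  if h : (i : ℕ) < n + 1 then s ⟨i, h⟩ else t (Fin.last n)

/-- Componentwise order on `ℕ^k × T`. -/
def prodLE {k : ℕ} {T : Type u} (le : T → T → Prop) (a b : (Fin k → ℕ) × T) : Prop :=
  (∀ i, a.1 i ≤ b.1 i) ∧ le a.2 b.2

/-- A map `g : [ℕ]^{m+1} → Q` is good if there are `s ⊲ t` with `g s ≤ g t`. -/
def GoodSub {m : ℕ} {Q : Type v} (le : Q → Q → Prop)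
    (g : {s : Fin (m + 1) → ℕ // StrictMono s} → Q) : Prop :=
  ∃ s t : {s : Fin (m + 1) → ℕ // StrictMono s}, Tril s.1 t.1 ∧ le (g s) (g t)

/-! ### The maps `f_k` -/

/-- The maps `f_k : [ℕ]^{k+1} → ℕ^k × ω^X_{n-k}` of Definition 2.4 (extended to all of
`ℕ^{k+1}`; only values on strictly increasing arguments matter). -/
noncomputable def fk {Y : Type u} [LinearOrder Y] (n : ℕ)
    (f : ℕ → (iterPack (basePack Y) n).T) :
    (k : ℕ) → (Fin (k + 1) → ℕ) → (Fin k → ℕ) × (iterPack (basePack Y) (n - k)).T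
  | 0, s => (fun i => i.elim0, f (s 0))
  | k + 1, u =>
    let a := fk n f k (u ∘ Fin.castSucc)
    let b := fk n f k (u ∘ Fin.succ)
    if h : k < n then
      let a2 := castT (show n - k = (n - (k + 1)) + 1 by omega) a.2
      let b2 := castT (show n - k = (n - (k + 1)) + 1 by omega) b.2
      (Fin.snoc a.1 (jIdx a2.1 b2.1), cIter Y (n - (k + 1)) a2.1 b2.1)
    else (Fin.snoc a.1 0, castT (show n - k = n - (k + 1) by omega) a.2)

/-- Linearity of a package (so that its carrier is a linear order). -/
def PackIsLinear (P : OrdPack.{u}) : Prop :=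
  (∀ a, P.le a a) ∧
  (∀ a b c, P.le a b → P.le b c → P.le a c) ∧
  (∀ a b, P.le a b → P.le b a → a = b) ∧
  (∀ a b, P.le a b ∨ P.le b a) ∧
  (∀ a b, P.lt a b ↔ P.le a b ∧ ¬ P.le b a)

/-- The Higman (sublist) order on finite lists over `(Q, le)`. -/
def HigmanLE {Q : Type v} (le : Q → Q → Prop) (σ τ : List Q) : Prop :=
  ∃ f : Fin σ.length → Fin τ.length, StrictMono f ∧ ∀ i, le (σ.get i) (τ.get (f i))
/-! ### Auxiliary lemmas for the proof -/

section Aux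

variable {X : Type u}

theorem jIdx_eq_min {α β : List X}
    (h : ¬ ∃ j, j < min α.length β.length ∧ α[j]? ≠ β[j]?) :
    jIdx α β = min α.length β.length := by
  simp only [jIdx, dif_neg h]

theorem jIdx_nil_left (β : List X) : jIdx ([] : List X) β = 0 := by
  have h : ¬ ∃ j, j < min ([] : List X).length β.length ∧ ([] : List X)[j]? ≠ β[j]? := by
    simp
  simp [jIdx_eq_min h]

theorem jIdx_nil_right (α : List X) : jIdx α ([] : List X) = 0 := by
  have h : ¬ ∃ j, j < min α.length ([] : List X).length ∧ α[j]? ≠ ([] : List X)[j]? := by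
    simp
  simp [jIdx_eq_min h]

theorem jIdx_cons_ne {a b : X} (l l' : List X) (hab : a ≠ b) :
    jIdx (a :: l) (b :: l') = 0 := by
  classical
  have hex : ∃ j, j < min (a :: l).length (b :: l').length ∧ (a :: l)[j]? ≠ (b :: l')[j]? :=
    ⟨0, by simp [Nat.lt_min], by simp [hab]⟩
  simp only [jIdx, dif_pos hex]
  rw [Nat.find_eq_zero]
  exact ⟨by simp [Nat.lt_min], by simp [hab]⟩

theorem jIdx_cons_eq (a : X) (l l' : List X) :
    jIdx (a :: l) (a :: l') = jIdx l l' + 1 := by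
  classical
  by_cases h : ∃ j, j < min l.length l'.length ∧ l[j]? ≠ l'[j]?
  · have hc : ∃ j, j < min (a :: l).length (a :: l').length ∧ (a :: l)[j]? ≠ (a :: l')[j]? := by
      obtain ⟨j, hj, hne⟩ := h
      exact ⟨j + 1, by simp only [List.length_cons, Nat.succ_min_succ]; omega,
        by simpa using hne⟩
    simp only [jIdx, dif_pos h, dif_pos hc]
    rw [Nat.find_eq_iff]
    refine ⟨⟨?_, ?_⟩, ?_⟩
    · have := (Nat.find_spec h).1
      simp only [List.length_cons, Nat.succ_min_succ]; omega
    · simpa using (Nat.find_spec h).2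
    · intro m hm hP
      match m, hP with
      | 0, hP => exact hP.2 (by simp)
      | k + 1, hP =>
        have hk : k < min l.length l'.length := by
          have := hP.1; simp only [List.length_cons, Nat.succ_min_succ] at this; omega
        exact Nat.find_min h (Nat.lt_of_succ_lt_succ hm) ⟨hk, by simpa using hP.2⟩
  · have hc : ¬ ∃ j, j < min (a :: l).length (a :: l').length ∧
        (a :: l)[j]? ≠ (a :: l')[j]? := by
      rintro ⟨j, hj, hne⟩
      match j with
      | 0 => exact hne (by simp)
      | k + 1 =>
        refine h ⟨k, ?_, by simpa using hne⟩
        simp only [List.length_cons, Nat.succ_min_succ] at hj; omega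
    rw [jIdx_eq_min hc, jIdx_eq_min h]
    simp [Nat.succ_min_succ]

theorem seqLT_iff (lt : X → X → Prop) (α β : List X) :
    SeqLT lt α β ↔
      ((∃ x y, α[jIdx α β]? = some x ∧ β[jIdx α β]? = some y ∧ lt x y) ∨
        (jIdx α β = α.length ∧ α.length < β.length)) := by
  constructor
  · rintro (⟨h, hlt⟩ | h2)
    · exact Or.inl ⟨_, _, List.getElem?_eq_getElem _, List.getElem?_eq_getElem _, hlt⟩
    · exact Or.inr h2
  · rintro (⟨x, y, hx, hy, hlt⟩ | h2)
    · obtain ⟨hx1, hx2⟩ := List.getElem?_eq_some_iff.1 hx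
      obtain ⟨hy1, hy2⟩ := List.getElem?_eq_some_iff.1 hy
      refine Or.inl ⟨lt_min hx1 hy1, ?_⟩
      rw [show α[jIdx α β]'_ = x from hx2, show β[jIdx α β]'_ = y from hy2]
      exact hlt
    · exact Or.inr h2

theorem not_seqLT_nil_right (lt : X → X → Prop) (α : List X) : ¬ SeqLT lt α [] := by
  rw [seqLT_iff]
  rintro (⟨x, y, _, hy, _⟩ | ⟨_, h2⟩)
  · simp at hy
  · simp at h2

theorem seqLT_nil_left (lt : X → X → Prop) (b : X) (l' : List X) :
    SeqLT lt ([] : List X) (b :: l') := by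
  rw [seqLT_iff]
  exact Or.inr ⟨by simp [jIdx_nil_left], by simp⟩

theorem seqLT_cons_ne (lt : X → X → Prop) {a b : X} (l l' : List X) (hab : a ≠ b) :
    SeqLT lt (a :: l) (b :: l') ↔ lt a b := by
  rw [seqLT_iff, jIdx_cons_ne l l' hab]
  constructor
  · rintro (⟨x, y, hx, hy, hlt⟩ | ⟨h1, _⟩)
    · simp only [List.getElem?_cons_zero, Option.some.injEq] at hx hy
      rwa [← hx, ← hy] at hlt
    · simp at h1
  · intro hlt
    exact Or.inl ⟨a, b, by simp, by simp, hlt⟩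

theorem seqLT_cons_eq (lt : X → X → Prop) (a : X) (l l' : List X) :
    SeqLT lt (a :: l) (a :: l') ↔ SeqLT lt l l' := by
  rw [seqLT_iff, seqLT_iff, jIdx_cons_eq]
  simp only [List.getElem?_cons_succ, List.length_cons, Nat.add_right_cancel_iff,
    Nat.add_lt_add_iff_right]

theorem seqLT_iff_lex (lt : X → X → Prop) (hirr : ∀ a, ¬ lt a a) :
    ∀ α β : List X, SeqLT lt α β ↔ List.Lex lt α β := by
  intro α
  induction α with
  | nil =>
    intro β
    cases β with
    | nil =>
      simp only [iff_iff_implies_and_implies]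
      exact ⟨fun h => absurd h (not_seqLT_nil_right lt []),
        fun h => absurd h (List.not_lex_nil (r := lt) (l := []))⟩
    | cons b l' => exact iff_of_true (seqLT_nil_left lt b l') List.Lex.nil
  | cons a l ih =>
    intro β
    cases β with
    | nil =>
      exact iff_of_false (not_seqLT_nil_right lt _) (List.not_lex_nil (r := lt))
    | cons b l' =>
      by_cases hab : a = b
      · subst hab
        rw [seqLT_cons_eq, ih l']
        constructor
        · exact List.Lex.cons
        · intro h
          cases h with
          | cons h => exact h
          | rel h => exact absurd h (hirr a)
      · rw [seqLT_cons_ne lt l l' hab]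
        constructor
        · exact List.Lex.rel
        · intro h
          cases h with
          | cons h => exact absurd rfl hab
          | rel h => exact h

end Aux

section WF

variable {X : Type u} [LinearOrder X]

/-- Ordinal measure of a list: `Σᵢ ω ^ rank lᵢ`. -/
noncomputable def oMeasure (hwf : WellFounded ((· < ·) : X → X → Prop)) : List X → Ordinal.{u} :=
  fun l => l.foldr (fun a acc => Ordinal.omega0 ^ (hwf.apply a).rank + acc) 0

theorem oMeasure_pos (hwf : WellFounded ((· < ·) : X → X → Prop)) (b : X) (l : List X) :
    0 < oMeasure hwf (b :: l) := by
  have h1 : (0 : Ordinal) < Ordinal.omega0 ^ (hwf.apply b).rank :=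
    Ordinal.opow_pos _ Ordinal.omega0_pos
  calc (0 : Ordinal) < Ordinal.omega0 ^ (hwf.apply b).rank := h1
    _ ≤ _ := le_self_add

theorem rank_le_of_le (hwf : WellFounded ((· < ·) : X → X → Prop)) {c a : X} (h : c ≤ a) :
    (hwf.apply c).rank ≤ (hwf.apply a).rank := by
  rcases lt_or_eq_of_le h with h | h
  · exact le_of_lt (by simpa using Acc.rank_lt_of_rel (hwf.apply a) h)
  · subst h; exact le_rfl

theorem oMeasure_le (hwf : WellFounded ((· < ·) : X → X → Prop)) (s : Ordinal) :
    ∀ l : List X, (∀ c ∈ l, (hwf.apply c).rank ≤ s) →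
      oMeasure hwf l ≤ Ordinal.omega0 ^ s * l.length := by
  intro l
  induction l with
  | nil => simp [oMeasure]
  | cons c l ih =>
    intro h
    have hc : (hwf.apply c).rank ≤ s := h c List.mem_cons_self
    have hl := ih fun x hx => h x (List.mem_cons_of_mem _ hx)
    have : oMeasure hwf (c :: l) =
        Ordinal.omega0 ^ (hwf.apply c).rank + oMeasure hwf l := rfl
    rw [this]
    calc Ordinal.omega0 ^ (hwf.apply c).rank + oMeasure hwf l
        ≤ Ordinal.omega0 ^ s + Ordinal.omega0 ^ s * l.length := by
          exact add_le_add (Ordinal.opow_le_opow_right Ordinal.omega0_pos hc) hl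
      _ = Ordinal.omega0 ^ s * (1 + l.length) := by rw [mul_add, mul_one]
      _ = Ordinal.omega0 ^ s * ((1 + l.length : ℕ) : Ordinal) := by push_cast; rfl
      _ = Ordinal.omega0 ^ s * (c :: l).length := by rw [List.length_cons, Nat.add_comm]

theorem oMeasure_head_bound (hwf : WellFounded ((· < ·) : X → X → Prop)) (s : Ordinal)
    (l : List X) (h : ∀ c ∈ l, (hwf.apply c).rank ≤ s) :
    Ordinal.omega0 ^ s + oMeasure hwf l < Ordinal.omega0 ^ (s + 1) := by
  calc Ordinal.omega0 ^ s + oMeasure hwf l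
      ≤ Ordinal.omega0 ^ s + Ordinal.omega0 ^ s * l.length :=
        add_le_add_right (oMeasure_le hwf s l h) _
    _ = Ordinal.omega0 ^ s * (1 + l.length) := by rw [mul_add, mul_one]
    _ < Ordinal.omega0 ^ s * Ordinal.omega0 := by
        refine (mul_lt_mul_iff_right₀ (Ordinal.opow_pos _ Ordinal.omega0_pos)).2 ?_
        have : ((1 + l.length : ℕ) : Ordinal) < Ordinal.omega0 := Ordinal.nat_lt_omega0 _
        simpa using this
    _ = Ordinal.omega0 ^ (s + 1) := by
        rw [Ordinal.add_one_eq_succ, Ordinal.opow_succ]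

theorem decList_all_le (hle : ∀ {x y z : X}, x ≤ y → y ≤ z → x ≤ z) {a : X} {l : List X}
    (h : List.Chain' (fun p q : X => q ≤ p) (a :: l)) : ∀ c ∈ l, c ≤ a := by
  haveI : IsTrans X (fun p q : X => q ≤ p) := ⟨fun _ _ _ h1 h2 => le_trans h2 h1⟩
  have hp := List.isChain_iff_pairwise.1 h
  exact fun c hc => (List.pairwise_cons.1 hp).1 c hc

theorem oMeasure_strictMono (hwf : WellFounded ((· < ·) : X → X → Prop)) :
    ∀ α β : List X, List.Chain' (fun p q : X => q ≤ p) α →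
      List.Chain' (fun p q : X => q ≤ p) β →
      List.Lex (· < ·) α β → oMeasure hwf α < oMeasure hwf β := by
  intro α β hα hβ h
  induction h with
  | nil => exact oMeasure_pos hwf _ _
  | @cons a l₁ l₂ h ih =>
    have : oMeasure hwf (a :: l₁) =
        Ordinal.omega0 ^ (hwf.apply a).rank + oMeasure hwf l₁ := rfl
    rw [this]
    have h2 : oMeasure hwf (a :: l₂) =
        Ordinal.omega0 ^ (hwf.apply a).rank + oMeasure hwf l₂ := rfl
    rw [h2]
    exact add_lt_add_right (ih hα.tail hβ.tail) _
  | @rel a l₁ b l₂ hab =>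
    have hall : ∀ c ∈ l₁, (hwf.apply c).rank ≤ (hwf.apply a).rank := fun c hc =>
      rank_le_of_le hwf (decList_all_le (fun h1 h2 => le_trans h1 h2) hα c hc)
    have hrank : (hwf.apply a).rank < (hwf.apply b).rank := by
      simpa using Acc.rank_lt_of_rel (hwf.apply b) hab
    have step1 : oMeasure hwf (a :: l₁) < Ordinal.omega0 ^ ((hwf.apply a).rank + 1) :=
      oMeasure_head_bound hwf _ l₁ hall
    have step2 : Ordinal.omega0 ^ ((hwf.apply a).rank + 1) ≤
        Ordinal.omega0 ^ (hwf.apply b).rank := by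
      refine Ordinal.opow_le_opow_right Ordinal.omega0_pos ?_
      rw [Ordinal.add_one_eq_succ, Order.succ_le_iff]
      exact hrank
    have step3 : Ordinal.omega0 ^ (hwf.apply b).rank ≤ oMeasure hwf (b :: l₂) :=
      le_self_add
    exact lt_of_lt_of_le step1 (le_trans step2 step3)

end WF

theorem stepPack_good (P : OrdPack.{u}) (hlin : PackIsLinear P) (hwf : WellFounded P.lt) :
    PackIsLinear (stepPack P) ∧ WellFounded (stepPack P).lt := by
  classical
  obtain ⟨hrefl, htrans, hanti, htot, hltiff⟩ := hlin
  letI : LinearOrder P.T :=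
    { le := P.le
      lt := P.lt
      le_refl := hrefl
      le_trans := htrans
      le_antisymm := fun a b h h' => hanti a b h h'
      le_total := htot
      lt_iff_le_not_ge := hltiff
      toDecidableLE := Classical.decRel _ }
  have hirr : ∀ a : P.T, ¬ P.lt a a := fun a h => ((hltiff a a).1 h).2 ((hltiff a a).1 h).1
  have hlex : ∀ α β : List P.T, SeqLT P.lt α β ↔ List.Lex (· < ·) α β :=
    seqLT_iff_lex (lt := P.lt) hirr
  haveI : IsTrans (List P.T) (List.Lex ((· < ·) : P.T → P.T → Prop)) :=
    ⟨fun _ _ _ h1 h2 => (isStrictWeakOrder_of_isOrderConnected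
      (r := List.Lex ((· < ·) : P.T → P.T → Prop))).trans _ _ _ h1 h2⟩
  have lexTrans : ∀ {α β γ : List P.T}, List.Lex ((· < ·) : P.T → P.T → Prop) α β →
      List.Lex (· < ·) β γ → List.Lex (· < ·) α γ := fun h1 h2 => Trans.trans h1 h2
  have lexAsymm : ∀ {α β : List P.T}, List.Lex ((· < ·) : P.T → P.T → Prop) α β →
      ¬ List.Lex (· < ·) β α := fun h1 h2 => asymm h1 h2
  have lexTricho : ∀ α β : List P.T, List.Lex ((· < ·) : P.T → P.T → Prop) α β ∨ α = β ∨
      List.Lex (· < ·) β α := fun α β => trichotomous α β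
  constructor
  · refine ⟨fun a => Or.inr rfl, ?_, ?_, ?_, ?_⟩
    · rintro a b c (hab | rfl) (hbc | rfl)
      · exact Or.inl ((hlex _ _).2 (lexTrans ((hlex _ _).1 hab) ((hlex _ _).1 hbc)))
      · exact Or.inl hab
      · exact Or.inl hbc
      · exact Or.inr rfl
    · rintro a b (hab | rfl) (hba | h)
      · exact absurd ((hlex _ _).1 hba) (lexAsymm ((hlex _ _).1 hab))
      · exact h.symm
      · rfl
      · rfl
    · intro a b
      rcases lexTricho a.1 b.1 with h | h | h
      · exact Or.inl (Or.inl ((hlex _ _).2 h))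
      · exact Or.inl (Or.inr (Subtype.ext h))
      · exact Or.inr (Or.inl ((hlex _ _).2 h))
    · intro a b
      constructor
      · intro h
        refine ⟨Or.inl h, ?_⟩
        rintro (hba | rfl)
        · exact lexAsymm ((hlex _ _).1 h) ((hlex _ _).1 hba)
        · exact lexAsymm ((hlex _ _).1 h) ((hlex _ _).1 h)
      · rintro ⟨hab | rfl, hn⟩
        · exact hab
        · exact absurd (Or.inr rfl) hn
  · have hwf' : WellFounded ((· < ·) : P.T → P.T → Prop) := hwf
    refine Subrelation.wf (r := InvImage (· < ·)
      (fun a : (stepPack P).T => oMeasure hwf' a.1)) ?_ (InvImage.wf _ Ordinal.lt_wf)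
    intro a b h
    exact oMeasure_strictMono hwf' a.1 b.1 a.2 b.2 ((hlex _ _).1 h)

theorem wf_no_descending {T : Type u} {r : T → T → Prop} (hwf : WellFounded r) :
    ¬ ∃ f : ℕ → T, ∀ i : ℕ, r (f (i + 1)) (f i) := by
  rintro ⟨f, hf⟩
  obtain ⟨m, hm, hmin⟩ := hwf.has_min (Set.range f) ⟨f 0, 0, rfl⟩
  obtain ⟨i, rfl⟩ := hm
  exact hmin (f (i + 1)) ⟨i + 1, rfl⟩ (hf i)

/-- Theorem 2.6. Let `Z` be a linear order that embeds into a linear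
order `X = ω + Y`. If every map `g : [ℕ]^{n+1} → ℕ^n × X` is good (componentwise order),
then `ω^Z_n` is a well order: a linear order with no infinite strictly `≺`-decreasing
sequence. -/
theorem iterZ_wellOrder_of_good {Z Y : Type u} [LinearOrder Z] [LinearOrder Y]
    (e : Z ↪o (ℕ ⊕ₗ Y)) (n : ℕ)
    (hgood : ∀ g : {s : Fin (n + 1) → ℕ // StrictMono s} → (Fin n → ℕ) × (ℕ ⊕ₗ Y),
      GoodSub (prodLE ((· ≤ ·) : (ℕ ⊕ₗ Y) → (ℕ ⊕ₗ Y) → Prop)) g) :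
    PackIsLinear (iterPack (linPack Z) n) ∧
    ¬ ∃ f : ℕ → (iterPack (linPack Z) n).T,
      ∀ i : ℕ, (iterPack (linPack Z) n).lt (f (i + 1)) (f i) := by
  classical
  -- Step 1: from `hgood`, the order `X = ℕ ⊕ₗ Y` has no infinite descending sequence.
  have hX : WellFounded ((· < ·) : (ℕ ⊕ₗ Y) → (ℕ ⊕ₗ Y) → Prop) := by
    rw [RelEmbedding.wellFounded_iff_isEmpty]
    constructor
    intro g
    obtain ⟨s, t, htr, hle⟩ :=
      hgood (fun s => (fun _ => 0, g (s.1 0)))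
    have h1 : s.1 0 < t.1 0 := htr.1
    have h2 : g (s.1 0) ≤ g (t.1 0) := hle.2
    have h3 : g (t.1 0) < g (s.1 0) := g.map_rel_iff.2 h1
    exact absurd h2 (not_le.2 h3)
  -- Step 2: transfer well-foundedness to `Z` along the embedding.
  have hZ : WellFounded ((· < ·) : Z → Z → Prop) :=
    Subrelation.wf (r := InvImage (· < ·) e) (fun h => e.lt_iff_lt.2 h) (InvImage.wf _ hX)
  -- Step 3: induction on the number of iterations.
  have main : ∀ m, PackIsLinear (iterPack (linPack Z) m) ∧
      WellFounded (iterPack (linPack Z) m).lt := by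
    intro m
    induction m with
    | zero =>
      have hbase : PackIsLinear (linPack Z) := by
        refine ⟨?_, ?_, ?_, ?_, ?_⟩
        · show ∀ a : Z, a ≤ a
          exact fun a => le_refl a
        · show ∀ a b c : Z, a ≤ b → b ≤ c → a ≤ c
          exact fun a b c => le_trans
        · show ∀ a b : Z, a ≤ b → b ≤ a → a = b
          exact fun a b => le_antisymm
        · show ∀ a b : Z, a ≤ b ∨ b ≤ a
          exact fun a b => le_total a b
        · show ∀ a b : Z, a < b ↔ a ≤ b ∧ ¬ b ≤ a
          exact fun a b => lt_iff_le_not_ge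
      exact ⟨hbase, hZ⟩
    | succ m ih => exact stepPack_good _ ih.1 ih.2
  exact ⟨(main n).1, wf_no_descending (main n).2⟩
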